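/- Let n ≥ 2 be an integer and let λ_1 ≥ λ_2 ≥ … ≥ λ_{2n} ≥ 0 be reals with ∑_{i=1}^{2n} λ_i = 1. Then the matrix ρ'_Λ satisfies: (i) ρ'_Λ is positive semidefinite and has trace 1; (ii) its characteristic polynomial is ∏_{i=1}^{2n} (x − λ_i), i.e., its spectrum is exactly {λ_1,…,λ_{2n}}; and (iii) ρ'_Λ is an X-matrix with parameters a_1 = b_1 = (λ_1+λ_{n+1})/2, r_1 = (λ_1−λ_{n+1})/2, a_j = λ_j, b_j = λ_{2n+2−j}, r_j = 0 for 2 ≤ j ≤ n, and for these parameters the value 2·max{0, max_{k∈[1,n]} ( r_k − ∑_{j≠k} √(a_j b_j) )} equals max{0, λ_1 − λ_{n+1} − 2·∑_{ℓ=2}^n √(λ_ℓ·λ_{2n+2−ℓ})}. Hence the upper bound max{0, λ_1 − λ_{n+1} − 2·∑_{ℓ=2}^n √(λ_ℓ λ_{2n+2−ℓ})} on the GM-concurrence of X-states with spectrum λ is attained. -/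

import Mathlib

open Polynomial

/-- The `2n × 2n` complex X-matrix with parameters `(a k, b k, r k, φ k)` for `k = 0, …, n-1`
(0-based version of the parameters `(a_k, b_k, r_k, φ_k)_{k=1}^n`):
its diagonal entries are `a_0, …, a_{n-1}, b_{n-1}, …, b_0`, and its antidiagonal entries
pair position `k` with position `2n-1-k`, carrying `r_k e^{i φ_k}` (row `k < n`) and
`r_k e^{-i φ_k}` (row `2n-1-k`); all other entries vanish. -/
noncomputable def XMat (n : ℕ) (a b r φ : ℕ → ℝ) :
    Matrix (Fin (2 * n)) (Fin (2 * n)) ℂ :=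
  Matrix.of fun i j =>
    if i = j then
      (if i.val < n then ((a i.val : ℝ) : ℂ) else ((b (2 * n - 1 - i.val) : ℝ) : ℂ))
    else if i.val + j.val = 2 * n - 1 then
      (if i.val < n then
        ((r i.val : ℝ) : ℂ) * Complex.exp (Complex.I * ((φ i.val : ℝ) : ℂ))
      else
        ((r (2 * n - 1 - i.val) : ℝ) : ℂ) *
          Complex.exp (-(Complex.I * ((φ (2 * n - 1 - i.val) : ℝ) : ℂ))))
    else 0

/-- The X-matrix `ρ'_Λ` built from a spectrum `lam` (0-based: `λ_k = lam (k-1)`): diagonal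
`(λ_1+λ_{n+1})/2, λ_2, …, λ_n, λ_{n+2}, …, λ_{2n}, (λ_1+λ_{n+1})/2` and corner antidiagonal
entries `(λ_1-λ_{n+1})/2`. -/
noncomputable def rhoPrime (n : ℕ) (lam : ℕ → ℝ) :
    Matrix (Fin (2 * n)) (Fin (2 * n)) ℝ :=
  Matrix.of fun i j =>
    if (i.val = 0 ∧ j.val = 0) ∨ (i.val = 2 * n - 1 ∧ j.val = 2 * n - 1) then
      (lam 0 + lam n) / 2
    else if (i.val = 0 ∧ j.val = 2 * n - 1) ∨ (i.val = 2 * n - 1 ∧ j.val = 0) then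
      (lam 0 - lam n) / 2
    else if i = j ∧ 1 ≤ i.val ∧ i.val ≤ n - 1 then lam i.val
    else if i = j ∧ n ≤ i.val ∧ i.val ≤ 2 * n - 2 then lam (i.val + 1)
    else 0

/-! With `H` the symmetric orthogonal matrix acting as `(1/√2) [[1, 1], [1, -1]]` on the first and
last coordinates, `ρ'_Λ = H D H` for `D = diag(λ_1, …, λ_n, λ_{n+2}, …, λ_{2n}, λ_{n+1})`, a
permutation of the spectrum. Hence `ρ'_Λ` is positive semidefinite with the characteristic
polynomial and the trace of `D`. In the GM-concurrence only the term `k = 1` can be positive,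
since `r_k = 0` for `k ≥ 2`. -/

namespace Matrix

variable {ι : Type*} [DecidableEq ι]

noncomputable def pairHadamard (p q : ι) : Matrix ι ι ℝ :=
  of fun i j =>
    if (i = p ∨ i = q) ∧ (j = p ∨ j = q) then
      (if i = q ∧ j = q then -(√2)⁻¹ else (√2)⁻¹)
    else if i = j then 1 else 0

lemma pairHadamard_transpose (p q : ι) : (pairHadamard p q)ᵀ = pairHadamard p q := by
  ext i j
  simp only [pairHadamard, transpose_apply, of_apply]
  by_cases hij : i = j
  · rw [hij]
  · simp only [hij, Ne.symm hij, and_comm, if_false]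

variable [Fintype ι]

lemma pairHadamard_mul_diagonal_mul_pairHadamard {p q : ι} (hpq : p ≠ q) (d : ι → ℝ) :
    pairHadamard p q * diagonal d * pairHadamard p q =
      of fun i j =>
        if (i = p ∧ j = p) ∨ (i = q ∧ j = q) then (d p + d q) / 2
        else if (i = p ∧ j = q) ∨ (i = q ∧ j = p) then (d p - d q) / 2
        else if i = j then d i else 0 := by
  have hc (x : ℝ) : (√2)⁻¹ * x * (√2)⁻¹ = x / 2 := by
    rw [mul_comm, ← mul_assoc, ← mul_inv, Real.mul_self_sqrt zero_le_two, inv_mul_eq_div]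
  have trichotomy (x : ι) : (x ≠ p ∧ x ≠ q) ∨ x = p ∨ x = q := by tauto
  ext i j
  rw [mul_apply]
  simp only [mul_diagonal]
  rcases trichotomy i with hi | hi | hi
  · rw [Fintype.sum_eq_single i fun k hk => by simp [pairHadamard, hi.1, hi.2, hk.symm]]
    simp [pairHadamard, hi.1, hi.2]
  all_goals
    rw [Fintype.sum_eq_add p q hpq fun k hk => by
      simp [pairHadamard, hi, hk.1, hk.2, Ne.symm hk.1, Ne.symm hk.2]]
    rcases trichotomy j with hj | hj | hj
    · simp [pairHadamard, hi, hpq, hpq.symm, hj.1, hj.2, Ne.symm hj.1, Ne.symm hj.2]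
    all_goals (simp [pairHadamard, hi, hj, hpq, hpq.symm, hc]; ring)

lemma pairHadamard_mul_self {p q : ι} (hpq : p ≠ q) :
    pairHadamard p q * pairHadamard p q = 1 := by
  have h := pairHadamard_mul_diagonal_mul_pairHadamard hpq fun _ => 1
  rw [diagonal_one, Matrix.mul_one] at h
  rw [h]
  ext i j
  by_cases hij : i = j <;> simp [one_apply, hij] <;> grind

variable {R : Type*} [CommRing R]

lemma charpoly_mul_mul_of_mul_self_eq_one {Q : Matrix ι ι R} (hQ : Q * Q = 1)
    (A : Matrix ι ι R) : (Q * A * Q).charpoly = A.charpoly := by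
  rw [charpoly_mul_comm, ← Matrix.mul_assoc, hQ, Matrix.one_mul]

lemma trace_mul_mul_of_mul_self_eq_one {Q : Matrix ι ι R} (hQ : Q * Q = 1)
    (A : Matrix ι ι R) : (Q * A * Q).trace = A.trace := by
  rw [trace_mul_comm, ← Matrix.mul_assoc, hQ, Matrix.one_mul]

end Matrix

lemma Fin.val_cycleIcc {m : ℕ} {i j : Fin m} (hij : i ≤ j) (k : Fin m) :
    (Fin.cycleIcc i j k : ℕ) =
      if k < i then (k : ℕ) else if k = j then (i : ℕ) else if k < j then (k : ℕ) + 1 else k := by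
  have : NeZero m := ⟨k.pos.ne'⟩
  split_ifs with hki hkj hkj'
  · rw [Fin.cycleIcc_of_lt hki]
  · rw [hkj, Fin.cycleIcc_of_last hij]
  · rw [Fin.cycleIcc_of_ge_of_lt (not_lt.mp hki) hkj']
    exact Fin.val_add_one_of_lt' (by omega)
  · rw [Fin.cycleIcc_of_gt (lt_of_le_of_ne (not_lt.mp hkj') (Ne.symm hkj))]

lemma max_zero_sup'_eq_of_nonpos {ι : Type*} {s : Finset ι} (hs : s.Nonempty) {f : ι → ℝ}
    {a : ι} (ha : a ∈ s) (hf : ∀ k ∈ s, k ≠ a → f k ≤ 0) :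
    max 0 (s.sup' hs f) = max 0 (f a) := by
  refine le_antisymm (max_le (le_max_left _ _) (Finset.sup'_le _ _ fun k hk => ?_))
    (max_le_max_left _ (Finset.le_sup' f ha))
  obtain rfl | hka := eq_or_ne k a
  · exact le_max_right _ _
  · exact (hf k hk hka).trans (le_max_left _ _)

open Matrix

section RhoPrime

variable {n : ℕ}


lemma rhoPrime_eq_pairHadamard_conj (hn : 0 < n) (lam : ℕ → ℝ) :
    rhoPrime n lam =
      pairHadamard (⟨0, by omega⟩ : Fin (2 * n)) ⟨2 * n - 1, by omega⟩ *
        diagonal (fun k => lam (Fin.cycleIcc (⟨n, by omega⟩ : Fin (2 * n)) ⟨2 * n - 1, by omega⟩ k))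
        * pairHadamard ⟨0, by omega⟩ ⟨2 * n - 1, by omega⟩ := by
  rw [pairHadamard_mul_diagonal_mul_pairHadamard (by simp [Fin.ext_iff]; omega)]
  ext i j
  have := i.isLt
  simp only [rhoPrime, of_apply, Fin.ext_iff, Fin.lt_def,
    Fin.val_cycleIcc (Fin.mk_le_mk.mpr (by omega) : (⟨n, _⟩ : Fin (2 * n)) ≤ ⟨2 * n - 1, _⟩)]
  split_ifs <;> first | rfl | (exfalso; omega)

lemma pairHadamard_first_last_mul_self (hn : 0 < n) :
    pairHadamard (⟨0, by omega⟩ : Fin (2 * n)) ⟨2 * n - 1, by omega⟩ *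
      pairHadamard ⟨0, by omega⟩ ⟨2 * n - 1, by omega⟩ = 1 :=
  pairHadamard_mul_self (by simp [Fin.ext_iff]; omega)

lemma rhoPrime_posSemidef (hn : 0 < n) {lam : ℕ → ℝ} (hpos : ∀ i < 2 * n, 0 ≤ lam i) :
    (rhoPrime n lam).PosSemidef := by
  have hD := PosSemidef.diagonal (R := ℝ)
    fun k => hpos (Fin.cycleIcc (⟨n, by omega⟩ : Fin (2 * n)) ⟨2 * n - 1, by omega⟩ k).val
      (Fin.isLt _)
  have h := hD.mul_mul_conjTranspose_same (pairHadamard ⟨0, by omega⟩ ⟨2 * n - 1, by omega⟩)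
  rwa [conjTranspose_eq_transpose_of_trivial, pairHadamard_transpose,
    ← rhoPrime_eq_pairHadamard_conj hn] at h

lemma trace_rhoPrime (hn : 0 < n) (lam : ℕ → ℝ) :
    (rhoPrime n lam).trace = ∑ i ∈ Finset.range (2 * n), lam i := by
  rw [rhoPrime_eq_pairHadamard_conj hn,
    trace_mul_mul_of_mul_self_eq_one (pairHadamard_first_last_mul_self hn), trace_diagonal]
  exact (Equiv.sum_comp _ fun k : Fin (2 * n) => lam k).trans (Fin.sum_univ_eq_sum_range lam _)

lemma charpoly_rhoPrime (hn : 0 < n) (lam : ℕ → ℝ) :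
    (rhoPrime n lam).charpoly = ∏ i ∈ Finset.range (2 * n), (X - C (lam i)) := by
  rw [rhoPrime_eq_pairHadamard_conj hn,
    charpoly_mul_mul_of_mul_self_eq_one (pairHadamard_first_last_mul_self hn), charpoly_diagonal]
  exact (Equiv.prod_comp _ fun k : Fin (2 * n) => X - C (lam k)).trans
    (Fin.prod_univ_eq_prod_range (fun i => X - C (lam i)) _)

lemma rhoPrime_map_ofReal_eq_XMat (lam : ℕ → ℝ) :
    (rhoPrime n lam).map (fun x => (x : ℂ)) =
      XMat n (fun j => if j = 0 then (lam 0 + lam n) / 2 else lam j)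
            (fun j => if j = 0 then (lam 0 + lam n) / 2 else lam (2 * n - j))
            (fun j => if j = 0 then (lam 0 - lam n) / 2 else 0)
            (fun _ => 0) := by
  ext i j
  have := i.isLt
  simp only [rhoPrime, XMat, map_apply, of_apply, Fin.ext_iff, Complex.ofReal_zero, mul_zero,
    Complex.exp_zero, mul_one, neg_zero]
  split_ifs <;>
    first
      | rfl
      | (exfalso; omega)
      | (norm_cast; congr 1; omega)

end RhoPrime

/-- For any sorted spectrum `λ_1 ≥ … ≥ λ_{2n} ≥ 0` summing to `1` (0-based `lam`), the matrix
`ρ'_Λ` is positive semidefinite with trace `1`, has characteristic polynomial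
`∏_{i=1}^{2n} (x - λ_i)`, is the X-matrix with parameters `a_1 = b_1 = (λ_1+λ_{n+1})/2`,
`r_1 = (λ_1-λ_{n+1})/2`, `a_j = λ_j`, `b_j = λ_{2n+2-j}`, `r_j = 0` (`2 ≤ j ≤ n`, phases `0`),
and for these parameters `2·max{0, max_k (r_k - ∑_{j≠k} √(a_j b_j))}` equals
`max{0, λ_1 - λ_{n+1} - 2 ∑_{ℓ=2}^n √(λ_ℓ λ_{2n+2-ℓ})}`: the GM-concurrence bound is attained. -/
theorem rhoPrime_is_XMEMS (n : ℕ) (hn : 2 ≤ n) (lam : ℕ → ℝ)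
    (hpos : ∀ i < 2 * n, 0 ≤ lam i)
    (hsum : ∑ i ∈ Finset.range (2 * n), lam i = 1) :
    (rhoPrime n lam).PosSemidef ∧
    (rhoPrime n lam).trace = 1 ∧
    (rhoPrime n lam).charpoly =
      ∏ i ∈ Finset.range (2 * n), (Polynomial.X - Polynomial.C (lam i)) ∧
    (rhoPrime n lam).map (fun x => (x : ℂ)) =
      XMat n (fun j => if j = 0 then (lam 0 + lam n) / 2 else lam j)
            (fun j => if j = 0 then (lam 0 + lam n) / 2 else lam (2 * n - j))
            (fun j => if j = 0 then (lam 0 - lam n) / 2 else 0)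
            (fun _ => 0) ∧
    2 * max 0 ((Finset.range n).sup' (Finset.nonempty_range_iff.mpr (by omega))
        (fun k => (if k = 0 then (lam 0 - lam n) / 2 else 0) -
          ∑ j ∈ (Finset.range n).erase k,
            Real.sqrt ((if j = 0 then (lam 0 + lam n) / 2 else lam j) *
              (if j = 0 then (lam 0 + lam n) / 2 else lam (2 * n - j))))) =
      max 0 (lam 0 - lam n -
        2 * ∑ ℓ ∈ Finset.Ico 1 n, Real.sqrt (lam ℓ * lam (2 * n - ℓ))) := by
  have hn0 : 0 < n := by omega
  refine ⟨rhoPrime_posSemidef hn0 hpos, (trace_rhoPrime hn0 lam).trans hsum,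
    charpoly_rhoPrime hn0 lam, rhoPrime_map_ofReal_eq_XMat lam, ?_⟩
  rw [max_zero_sup'_eq_of_nonpos _ (Finset.mem_range.mpr hn0) fun k _ hk => by
      simpa [hk] using Finset.sum_nonneg fun j _ => Real.sqrt_nonneg _]
  have hIco : (Finset.range n).erase 0 = Finset.Ico 1 n := by
    ext j
    simp only [Finset.mem_erase, Finset.mem_range, Finset.mem_Ico]
    omega
  have hterms : ∀ j ∈ Finset.Ico 1 n,
      √((if j = 0 then (lam 0 + lam n) / 2 else lam j) *
        (if j = 0 then (lam 0 + lam n) / 2 else lam (2 * n - j))) = √(lam j * lam (2 * n - j)) :=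
    fun j hj => by
      have hj0 : j ≠ 0 := by simp only [Finset.mem_Ico] at hj; omega
      simp only [if_neg hj0]
  rw [if_pos rfl, hIco, Finset.sum_congr rfl hterms, mul_max_of_nonneg _ _ zero_le_two, mul_zero]
  congr 1
  ring
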